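/- arXiv:1707.00981 — 4 statements merged into one kernel-verified Lean document; each statement's English description precedes it below -/
import Mathlib

section
/- For the Steane code, there exist a 3-element subset A ⊆ {1,…,7} and a target t ∈ A such that for every θ ∈ ℝ the five-gate circuit V = (∏_{i∈A\{t}} CNOT_{i→t})⁻¹ · Z(θ)_t · (∏_{i∈A\{t}} CNOT_{i→t}) (four CNOT gates and one Z(θ) gate, acting only on the qubits in A) preserves the Steane codespace and implements the logical Z(θ) gate: V|0̄⟩ = |0̄⟩ and V|1̄⟩ = e^{iθ}|1̄⟩. In particular, taking θ = π/4 gives an implementation of the logical T gate on the Steane code involving only 3 of the 7 qubits. -/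
open scoped Classical
open Matrix

noncomputable section

/-- basis vector `|x⟩` -/
def bvec {α : Type*} (x : α) : α → ℂ := fun y => if y = x then 1 else 0

/-- inner product `⟪v, w⟫` on basis-indexed amplitude vectors -/
def qInner {α : Type*} [Fintype α] (v w : α → ℂ) : ℂ :=
  ∑ x, (starRingEnd ℂ) (v x) * w x

/-- Pauli X -/
def σx : Matrix Bool Bool ℂ := Matrix.of fun a b => if a = !b then 1 else 0
/-- Pauli Y -/
def σy : Matrix Bool Bool ℂ :=
  Matrix.of fun a b => if a = !b then (if a then Complex.I else -Complex.I) else 0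
/-- Pauli Z -/
def σz : Matrix Bool Bool ℂ := Matrix.of fun a b => if a = b then (if a then -1 else 1) else 0
/-- Hadamard -/
def Hgate : Matrix Bool Bool ℂ :=
  Matrix.of fun a b => (if a && b then -1 else 1) / (Real.sqrt 2 : ℂ)
/-- phase gate S = diag(1, i) -/
def Sgate : Matrix Bool Bool ℂ :=
  Matrix.of fun a b => if a = b then (if a then Complex.I else 1) else 0
/-- Z(θ) = diag(1, e^{iθ}) -/
def Zrot (θ : ℝ) : Matrix Bool Bool ℂ :=
  Matrix.of fun a b => if a = b then (if a then Complex.exp (θ * Complex.I) else 1) else 0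

/-- tensor product over `ι` of single-qubit matrices -/
def tensMat {ι : Type*} [Fintype ι] (P : ι → Matrix Bool Bool ℂ) :
    Matrix (ι → Bool) (ι → Bool) ℂ :=
  Matrix.of fun x y => ∏ i, P i (x i) (y i)

/-- CNOT with control `i`, target `t`, in one register -/
def CNOT {ι : Type*} (i t : ι) : Matrix (ι → Bool) (ι → Bool) ℂ :=
  Matrix.of fun y x => if y = Function.update x t (xor (x i) (x t)) then 1 else 0

/-- Z(θ) applied to qubit `t` -/
def ZrotAt {ι : Type*} (θ : ℝ) (t : ι) : Matrix (ι → Bool) (ι → Bool) ℂ :=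
  Matrix.of fun y x => if y = x then (if x t then Complex.exp (θ * Complex.I) else 1) else 0

/-- `parityOdd A x` : the bits of `x` indexed by `A` have odd parity -/
def parityOdd {ι : Type*} (A : Finset ι) (x : ι → Bool) : Prop :=
  (A.filter fun i => x i = true).card % 2 = 1

/-- `∏_{i ∈ A} Z_i` -/
def ZA {ι : Type*} [Fintype ι] (A : Finset ι) : Matrix (ι → Bool) (ι → Bool) ℂ :=
  tensMat fun i => if i ∈ A then σz else 1

/-- `∏_{j ∈ B} X_j` -/
def XB {ι : Type*} [Fintype ι] (B : Finset ι) : Matrix (ι → Bool) (ι → Bool) ℂ :=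
  tensMat fun j => if j ∈ B then σx else 1

/-- the joint `+1`-eigenspace of a set of matrices, as a submodule -/
def jointFixed {ι : Type*} [Fintype ι] (S : Set (Matrix (ι → Bool) (ι → Bool) ℂ)) :
    Submodule ℂ ((ι → Bool) → ℂ) where
  carrier := {v | ∀ g ∈ S, g.mulVec v = v}
  add_mem' := by
    intro a b ha hb g hg
    rw [Matrix.mulVec_add, ha g hg, hb g hg]
  zero_mem' := by
    intro g hg
    rw [Matrix.mulVec_zero]
  smul_mem' := by
    intro c a ha g hg
    rw [Matrix.mulVec_smul, ha g hg]

/-- a matrix on qubits `ι` acts only on the qubits in `A` (identity elsewhere) -/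
def ActsOnlyOn {ι : Type*} (M : Matrix (ι → Bool) (ι → Bool) ℂ) (A : Set ι) : Prop :=
  ∃ W : Matrix (A → Bool) (A → Bool) ℂ,
    ∀ x y, M x y =
      if ∀ i, i ∉ A → x i = y i then W (fun i => x i.val) (fun i => y i.val) else 0

/-- an `ι`-qubit Pauli operator `i^c · ⨂_i P_i` -/
structure PauliOp (ι : Type*) [Fintype ι] where
  phase : Fin 4
  fac : ι → Matrix Bool Bool ℂ
  isPauli : ∀ i, fac i = 1 ∨ fac i = σx ∨ fac i = σy ∨ fac i = σz

def PauliOp.toMatrix {ι : Type*} [Fintype ι] (p : PauliOp ι) :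
    Matrix (ι → Bool) (ι → Bool) ℂ :=
  Complex.I ^ (p.phase : ℕ) • tensMat p.fac

/-- number of non-identity tensor factors -/
def PauliOp.weight {ι : Type*} [Fintype ι] (p : PauliOp ι) : ℕ :=
  Set.ncard {i | p.fac i ≠ 1}

/-- tensor product of states of two registers -/
def tens2 {ι κ : Type*} (v : (ι → Bool) → ℂ) (w : (κ → Bool) → ℂ) :
    (ι → Bool) × (κ → Bool) → ℂ :=
  fun p => v p.1 * w p.2

/-- CNOT with control qubit `i` of the first register and target qubit `j` of the second -/
def CNOT2 {ι κ : Type*} (i : ι) (j : κ) :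
    Matrix ((ι → Bool) × (κ → Bool)) ((ι → Bool) × (κ → Bool)) ℂ :=
  Matrix.of fun y x =>
    if y = (x.1, Function.update x.2 j (xor (x.1 i) (x.2 j))) then 1 else 0

-- Steane code
def steaneGen : Fin 3 → (Fin 7 → Bool) :=
  ![![false, false, false, true, true, true, true],
    ![false, true, true, false, false, true, true],
    ![true, false, true, false, true, false, true]]

/-- the binary [7,3] code generated by 0001111, 0110011, 1010101 -/
def hammingC : Set (Fin 7 → Bool) :=
  {c | ∃ a b e : Bool,
    c = fun i => xor (a && steaneGen 0 i) (xor (b && steaneGen 1 i) (e && steaneGen 2 i))}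

/-- Steane logical basis: `steane false = |0̄⟩`, `steane true = |1̄⟩ = X^{⊗7}|0̄⟩` -/
def steane : Bool → ((Fin 7 → Bool) → ℂ) := fun b =>
  if b then (tensMat fun _ => σx).mulVec (fun y => if y ∈ hammingC then ((Real.sqrt 8 : ℂ))⁻¹ else 0)
  else fun y => if y ∈ hammingC then ((Real.sqrt 8 : ℂ))⁻¹ else 0

-- 5-qubit code
def fiveStab : Fin 4 → Matrix (Fin 5 → Bool) (Fin 5 → Bool) ℂ :=
  ![tensMat ![σx, σz, σz, σx, 1],
    tensMat ![1, σx, σz, σz, σx],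
    tensMat ![σx, 1, σx, σz, σz],
    tensMat ![σz, σx, 1, σx, σz]]

def fiveCodespace : Submodule ℂ ((Fin 5 → Bool) → ℂ) :=
  jointFixed (Set.range fiveStab)

/-- a choice of logical basis for the 5-qubit code -/
def fiveLogical (v : Bool → ((Fin 5 → Bool) → ℂ)) : Prop :=
  (∀ b, v b ∈ fiveCodespace) ∧ (∀ b, qInner (v b) (v b) = 1) ∧
  (tensMat fun _ : Fin 5 => σz).mulVec (v false) = v false ∧
  (tensMat fun _ : Fin 5 => σz).mulVec (v true) = -(v true) ∧
  (tensMat fun _ : Fin 5 => σx).mulVec (v false) = v true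

-- [[15,1,3]] Reed–Muller code
def rmBit (i : Fin 15) (j : Fin 4) : Bool := Nat.testBit (i.val + 1) j.val

def rmXstab (j : Fin 4) : Matrix (Fin 15 → Bool) (Fin 15 → Bool) ℂ :=
  tensMat fun i => if rmBit i j then σx else 1

def rmZstab (j k : Fin 4) : Matrix (Fin 15 → Bool) (Fin 15 → Bool) ℂ :=
  tensMat fun i => if rmBit i j && rmBit i k then σz else 1

def rmCodespace : Submodule ℂ ((Fin 15 → Bool) → ℂ) :=
  jointFixed ({M | ∃ j, M = rmXstab j} ∪ {M | ∃ j k, j < k ∧ M = rmZstab j k})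

/-- a choice of logical basis for the [[15,1,3]] Reed–Muller code -/
def rmLogical (w : Bool → ((Fin 15 → Bool) → ℂ)) : Prop :=
  (∀ b, w b ∈ rmCodespace) ∧ (∀ b, qInner (w b) (w b) = 1) ∧
  (tensMat fun _ : Fin 15 => σz).mulVec (w false) = w false ∧
  (tensMat fun _ : Fin 15 => σz).mulVec (w true) = -(w true) ∧
  (tensMat fun _ : Fin 15 => σx).mulVec (w false) = w true

/-! The circuit is the diagonal gate multiplying `|x⟩` by `e^{iθ}` exactly when `x₀ ⊕ x₁ ⊕ x₂ = 1`:
the CNOTs into qubit `0` write this parity onto qubit `0`, `Z(θ)` reads it off, and the inverse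
CNOTs undo the writing. Every codeword of `C` has even weight on the first three positions, while
the complement of a codeword has odd weight there, so `|0̄⟩` is fixed and `|1̄⟩` picks up `e^{iθ}`. -/

section Circuit

variable {ι : Type*}

def parityOn (l : List ι) (x : ι → Bool) : Bool := (l.map x).foldr xor false

@[simp]
lemma parityOn_nil (x : ι → Bool) : parityOn [] x = false := rfl

@[simp]
lemma parityOn_cons (i : ι) (l : List ι) (x : ι → Bool) :
    parityOn (i :: l) x = xor (x i) (parityOn l x) := rfl

lemma parityOn_update_of_notMem [DecidableEq ι] {t : ι} {l : List ι} (ht : t ∉ l)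
    (x : ι → Bool) (b : Bool) :
    parityOn l (Function.update x t b) = parityOn l x := by
  induction l with
  | nil => rfl
  | cons i l ih =>
    have hit : i ≠ t := fun h => ht (h ▸ List.mem_cons_self ..)
    simp [Function.update_of_ne hit, ih (fun h => ht (List.mem_cons_of_mem _ h))]

variable [Fintype ι]

lemma zrotAt_eq_diagonal (θ : ℝ) (t : ι) :
    ZrotAt θ t = diagonal fun y => if y t then Complex.exp (θ * Complex.I) else 1 := by
  ext y x
  by_cases h : y = x <;> simp [ZrotAt, diagonal, h]

variable [DecidableEq ι]

lemma cnot_apply (i t : ι) (y x : ι → Bool) :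
    CNOT i t y x = if y = Function.update x t (xor (x i) (x t)) then 1 else 0 := by
  simp only [CNOT, of_apply]
  congr!

lemma cnot_mulVec {i t : ι} (hit : i ≠ t) (v : (ι → Bool) → ℂ) :
    CNOT i t *ᵥ v = fun y => v (Function.update y t (xor (y i) (y t))) := by
  funext y
  have hinv : ∀ x : ι → Bool, y = Function.update x t (xor (x i) (x t)) ↔
      x = Function.update y t (xor (y i) (y t)) := by
    intro x
    constructor <;> rintro rfl <;> ext j <;> by_cases hj : j = t <;>
      simp [hj, Function.update_of_ne hit]
  simp [cnot_apply, mulVec, dotProduct, hinv]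

lemma prod_cnot_mulVec {t : ι} {l : List ι} (ht : t ∉ l) (v : (ι → Bool) → ℂ) :
    (l.map fun i => CNOT i t).prod *ᵥ v =
      fun y => v (Function.update y t (parityOn (t :: l) y)) := by
  induction l with
  | nil => simp
  | cons i l ih =>
    have hit : i ≠ t := fun h => ht (h ▸ List.mem_cons_self ..)
    have htl : t ∉ l := fun h => ht (List.mem_cons_of_mem _ h)
    funext y
    simp only [List.map_cons, List.prod_cons, ← mulVec_mulVec, ih htl, cnot_mulVec hit,
      parityOn_cons, parityOn_update_of_notMem htl, Function.update_self, Function.update_idem]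
    congr 2
    cases y i <;> cases y t <;> simp

lemma prod_cnot_mul_self {t : ι} {l : List ι} (ht : t ∉ l) :
    (l.map fun i => CNOT i t).prod * (l.map fun i => CNOT i t).prod = 1 := by
  refine Matrix.toLin'.injective (LinearMap.ext fun v => ?_)
  simp only [Matrix.toLin'_apply, ← mulVec_mulVec, prod_cnot_mulVec ht, one_mulVec]
  funext y
  simp [parityOn_update_of_notMem ht]

theorem cnot_conj_zrotAt {t : ι} {l : List ι} (ht : t ∉ l) (θ : ℝ) :
    (l.map fun i => CNOT i t).prod⁻¹ * ZrotAt θ t * (l.map fun i => CNOT i t).prod =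
      diagonal fun y => if parityOn (t :: l) y then Complex.exp (θ * Complex.I) else 1 := by
  rw [Matrix.inv_eq_left_inv (prod_cnot_mul_self ht), zrotAt_eq_diagonal]
  refine Matrix.toLin'.injective (LinearMap.ext fun v => ?_)
  simp only [Matrix.toLin'_apply, ← mulVec_mulVec, prod_cnot_mulVec ht]
  funext y
  simp [mulVec_diagonal, parityOn_update_of_notMem ht]

end Circuit

lemma tensMat_σx_mulVec {ι : Type*} [Fintype ι] [DecidableEq ι] (v : (ι → Bool) → ℂ) :
    (tensMat fun _ : ι => σx) *ᵥ v = fun y => v (fun i => !y i) := by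
  funext y
  have hflip : ∀ x : ι → Bool,
      (∏ i, σx (y i) (x i)) = if x = (fun i => !y i) then 1 else 0 := by
    intro x
    simp only [σx, of_apply, Finset.prod_boole, Finset.mem_univ, true_implies, funext_iff]
    congr! 2 with i
    cases x i <;> cases y i <;> decide
  simp [mulVec, dotProduct, tensMat, hflip]

lemma diagonal_mulVec_eq_smul {α : Type*} [Fintype α] [DecidableEq α] {d : α → ℂ} {c : ℂ}
    {v : α → ℂ} (h : ∀ y, v y ≠ 0 → d y = c) : diagonal d *ᵥ v = c • v := by
  funext y
  by_cases hy : v y = 0 <;> simp [mulVec_diagonal, hy, h y]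

lemma mulVec_mem_span_pair {α : Type*} [Fintype α] {M : Matrix α α ℂ} {a b : α → ℂ} {μ ν : ℂ}
    (ha : M *ᵥ a = μ • a) (hb : M *ᵥ b = ν • b) {u : α → ℂ} (hu : u ∈ Submodule.span ℂ {a, b}) :
    M *ᵥ u ∈ Submodule.span ℂ {a, b} := by
  obtain ⟨c, d, rfl⟩ := Submodule.mem_span_pair.1 hu
  rw [mulVec_add, mulVec_smul, mulVec_smul, ha, hb, smul_smul, smul_smul]
  exact Submodule.mem_span_pair.2 ⟨c * μ, d * ν, rfl⟩

lemma parityOn_of_mem_hammingC {c : Fin 7 → Bool} (hc : c ∈ hammingC) :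
    parityOn [0, 1, 2] c = false := by
  obtain ⟨a, b, e, rfl⟩ := hc
  revert a b e
  decide

lemma parityOn_not_of_mem_hammingC {c : Fin 7 → Bool} (hc : c ∈ hammingC) :
    parityOn [0, 1, 2] (fun i => !c i) = true := by
  obtain ⟨a, b, e, rfl⟩ := hc
  revert a b e
  decide

lemma mem_hammingC_of_steane_false_ne_zero {y : Fin 7 → Bool} (hy : steane false y ≠ 0) :
    y ∈ hammingC := by
  by_contra h
  simp [steane, h] at hy

lemma steane_true_eq : steane true = fun y => steane false (fun i => !y i) := by
  have hX : steane true = (tensMat fun _ => σx) *ᵥ steane false := by simp [steane]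
  rw [hX, tensMat_σx_mulVec]

lemma diagonal_parity_mulVec_steane (e : ℂ) (b : Bool) :
    (diagonal fun y => if parityOn [0, 1, 2] y then e else 1) *ᵥ steane b =
      (if b then e else 1) • steane b := by
  refine diagonal_mulVec_eq_smul fun y hy => ?_
  cases b
  · simp [parityOn_of_mem_hammingC (mem_hammingC_of_steane_false_ne_zero hy)]
  · rw [steane_true_eq] at hy
    have hodd : parityOn [0, 1, 2] y = true := by
      simpa only [Bool.not_not] using
        parityOn_not_of_mem_hammingC (mem_hammingC_of_steane_false_ne_zero hy)
    simp [hodd]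

/-- for the Steane code there are a 3-element set `A ⊆ {1,…,7}` and
`t ∈ A` such that for every `θ` the circuit
`V = (∏_{i∈A\{t}} CNOT_{i→t})⁻¹ · Z(θ)_t · (∏_{i∈A\{t}} CNOT_{i→t})` preserves the
Steane codespace and implements the logical `Z(θ)` gate. -/
theorem stmt4 :
    ∃ (A : Finset (Fin 7)) (t : Fin 7) (l : List (Fin 7)),
      A.card = 3 ∧ t ∈ A ∧ l.Nodup ∧ l.toFinset = A.erase t ∧
      ∀ θ : ℝ,
        ((l.map fun i => CNOT i t).prod⁻¹ * ZrotAt θ t *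
            (l.map fun i => CNOT i t).prod).mulVec (steane false) = steane false ∧
        ((l.map fun i => CNOT i t).prod⁻¹ * ZrotAt θ t *
            (l.map fun i => CNOT i t).prod).mulVec (steane true)
          = Complex.exp (θ * Complex.I) • steane true ∧
        ∀ u ∈ Submodule.span ℂ {steane false, steane true},
          ((l.map fun i => CNOT i t).prod⁻¹ * ZrotAt θ t *
              (l.map fun i => CNOT i t).prod).mulVec u
            ∈ Submodule.span ℂ {steane false, steane true} := by
  refine ⟨{0, 1, 2}, 0, [1, 2], by decide, by decide, by decide, by decide, fun θ => ?_⟩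
  rw [cnot_conj_zrotAt (by decide)]
  have h0 := diagonal_parity_mulVec_steane (Complex.exp (θ * Complex.I)) false
  have h1 := diagonal_parity_mulVec_steane (Complex.exp (θ * Complex.I)) true
  rw [if_neg Bool.false_ne_true] at h0
  rw [if_pos rfl] at h1
  exact ⟨by rwa [one_smul] at h0, h1, fun u hu => mulVec_mem_span_pair h0 h1 hu⟩

end
end

section
/- There exists a sequence of 17 pairs (i₁,j₁),…,(i₁₇,j₁₇) ∈ {1,…,7} × {1,…,15} such that the ordered product U = CNOT_{i₁₇→j₁₇} ⋯ CNOT_{i₁→j₁} of 17 physical CNOT gates, each with control a qubit of a Steane code block and target a qubit of a [[15,1,3]] Reed–Muller code block, maps the tensor product of the two codespaces onto itself and implements the logical CNOT gate with the Steane block as control and the Reed–Muller block as target: U(|ā⟩ ⊗ |b̃⟩) = |ā⟩ ⊗ |(a⊕b)͂⟩ for all a, b ∈ {0,1}. -/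
open scoped Classical
open Matrix

noncomputable section

section stmt9Aux

/-- the 17 CNOT pairs -/
def Lpairs : List (Fin 7 × Fin 15) :=
  [(0,0),(0,13),(0,14),(1,0),(1,9),(1,10),(2,0),(2,3),(2,4),
   (3,11),(3,12),(4,1),(4,2),(5,5),(5,6),(6,7),(6,8)]

/-- XOR pattern applied to the second register as a function of the first -/
def fXor (l : List (Fin 7 × Fin 15)) (x : Fin 7 → Bool) (j : Fin 15) : Bool :=
  l.foldr (fun p acc => if p.2 = j then xor (x p.1) acc else acc) false

/-- the classical action of one CNOT2 gate -/
def cgate {ι κ : Type*} (i : ι) (j : κ) (x : (ι → Bool) × (κ → Bool)) :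
    (ι → Bool) × (κ → Bool) :=
  (x.1, Function.update x.2 j (xor (x.1 i) (x.2 j)))

lemma cgate_invol {ι κ : Type*} (i : ι) (j : κ) (x : (ι → Bool) × (κ → Bool)) :
    cgate i j (cgate i j x) = x := by
  unfold cgate
  refine Prod.ext rfl ?_
  simp only [Function.update_self, Function.update_idem]
  have h : xor (x.1 i) (xor (x.1 i) (x.2 j)) = x.2 j := by
    cases x.1 i <;> cases x.2 j <;> rfl
  rw [h, Function.update_eq_self]

lemma cgate_fst {ι κ : Type*} (i : ι) (j : κ) (x : (ι → Bool) × (κ → Bool)) :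
    (cgate i j x).1 = x.1 := rfl

lemma cgate_snd_self {ι κ : Type*} (i : ι) (j : κ) (x : (ι → Bool) × (κ → Bool)) :
    (cgate i j x).2 j = xor (x.1 i) (x.2 j) := by
  unfold cgate
  exact Function.update_self j _ x.2

lemma cgate_snd_ne {ι κ : Type*} (i : ι) (j : κ) (x : (ι → Bool) × (κ → Bool))
    {j' : κ} (h : j' ≠ j) : (cgate i j x).2 j' = x.2 j' := by
  unfold cgate
  exact Function.update_of_ne h _ x.2

lemma cnot2_mulVec (i : Fin 7) (j : Fin 15)
    (v : ((Fin 7 → Bool) × (Fin 15 → Bool)) → ℂ) :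
    (CNOT2 i j).mulVec v = fun q => v (cgate i j q) := by
  funext q
  have hval : ∀ x : (Fin 7 → Bool) × (Fin 15 → Bool),
      (CNOT2 i j) q x = if x = cgate i j q then (1 : ℂ) else 0 := by
    intro x
    by_cases hx : x = cgate i j q
    · rw [hx, if_pos rfl]
      show (CNOT2 i j) q (cgate i j q) = 1
      simp only [CNOT2, Matrix.of_apply]
      have hcc : q = cgate i j (cgate i j q) := (cgate_invol i j q).symm
      exact if_pos hcc
    · rw [if_neg hx]
      simp only [CNOT2, Matrix.of_apply]
      refine if_neg (fun hq => hx ?_)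
      have hq' : q = cgate i j x := hq
      rw [hq', cgate_invol]
  simp only [Matrix.mulVec, dotProduct, hval, ite_mul, one_mul, zero_mul,
    Finset.sum_ite_eq', Finset.mem_univ, if_true]

lemma prod_cnot2_mulVec (l : List (Fin 7 × Fin 15))
    (v : ((Fin 7 → Bool) × (Fin 15 → Bool)) → ℂ) :
    ((l.map fun p => CNOT2 p.1 p.2).prod).mulVec v
      = fun q => v (q.1, fun j => xor (q.2 j) (fXor l q.1 j)) := by
  induction l with
  | nil =>
      funext q
      simp only [List.map_nil, List.prod_nil, Matrix.one_mulVec, fXor, List.foldr_nil,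
        Bool.xor_false]
  | cons p l ih =>
      funext q
      simp only [List.map_cons, List.prod_cons, ← Matrix.mulVec_mulVec, cnot2_mulVec, ih]
      refine congrArg v (Prod.ext rfl ?_)
      funext j'
      show xor ((cgate p.1 p.2 q).2 j') (fXor l (cgate p.1 p.2 q).1 j')
        = xor (q.2 j') (fXor (p :: l) q.1 j')
      rw [cgate_fst]
      have hc : fXor (p :: l) q.1 j'
          = if p.2 = j' then xor (q.1 p.1) (fXor l q.1 j') else fXor l q.1 j' := rfl
      by_cases h : j' = p.2
      · subst h
        rw [cgate_snd_self, hc, if_pos rfl]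
        cases q.1 p.1 <;> cases q.2 p.2 <;> cases fXor l q.1 p.2 <;> rfl
      · rw [cgate_snd_ne _ _ _ h, hc, if_neg (Ne.symm h)]

lemma tensXs_mulVec {ι : Type*} [Fintype ι] {instF : Fintype (ι → Bool)} (S : ι → Bool)
    (w : (ι → Bool) → ℂ) :
    @Matrix.mulVec (ι → Bool) (ι → Bool) ℂ _ instF (tensMat fun i => if S i then σx else 1) w
      = fun y => w (fun i => xor (y i) (S i)) := by
  funext y
  have hfac : ∀ z : ι → Bool,
      (tensMat fun i => if S i then σx else 1) y z
        = if (fun i => xor (y i) (S i)) = z then 1 else 0 := by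
    intro z
    have h1 : ∀ i : ι, ((if S i then σx else 1) : Matrix Bool Bool ℂ) (y i) (z i)
        = if xor (y i) (S i) = z i then 1 else 0 := by
      intro i
      cases hS : S i <;> cases hy : y i <;> cases hz : z i <;>
        simp [σx, Matrix.one_apply]
    have e0 : (tensMat fun i => if S i then σx else 1) y z
        = ∏ i, ((if S i then σx else 1) : Matrix Bool Bool ℂ) (y i) (z i) := rfl
    rw [e0, Finset.prod_congr rfl fun i _ => h1 i, Finset.prod_boole]
    by_cases hz : (fun i => xor (y i) (S i)) = z
    · rw [if_pos (fun i _ => congrFun hz i), if_pos hz]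
    · rw [if_neg (fun hall => hz (funext fun i => hall i (Finset.mem_univ i))), if_neg hz]
  simp only [Matrix.mulVec, dotProduct, hfac, ite_mul, one_mul, zero_mul,
    Finset.sum_ite_eq, Finset.mem_univ, if_true]

lemma mem_jointFixed {ι : Type*} [Fintype ι] {S : Set (Matrix (ι → Bool) (ι → Bool) ℂ)}
    {v : (ι → Bool) → ℂ} (hv : v ∈ jointFixed S) {g : Matrix (ι → Bool) (ι → Bool) ℂ}
    (hg : g ∈ S) : g.mulVec v = v := hv g hg

lemma rm_shift (w : (Fin 15 → Bool) → ℂ) (hw : w ∈ rmCodespace) (j : Fin 4)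
    (y : Fin 15 → Bool) :
    w (fun i => xor (y i) (rmBit i j)) = w y := by
  have hg : rmXstab j ∈ ({M | ∃ j, M = rmXstab j} ∪ {M | ∃ j k, j < k ∧ M = rmZstab j k} :
      Set (Matrix (Fin 15 → Bool) (Fin 15 → Bool) ℂ)) := Set.mem_union_left _ ⟨j, rfl⟩
  have h := mem_jointFixed hw hg
  unfold rmXstab at h
  rw [tensXs_mulVec] at h
  exact congrFun h y

lemma rm_flip (w : Bool → ((Fin 15 → Bool) → ℂ))
    (hx : (tensMat fun _ : Fin 15 => σx).mulVec (w false) = w true) :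
    ∀ (b : Bool) (y : Fin 15 → Bool), w b (fun i => xor (y i) true) = w (!b) y := by
  have he : (tensMat fun _ : Fin 15 => σx)
      = tensMat fun i : Fin 15 => if (fun _ : Fin 15 => true) i then σx else 1 := by
    simp
  rw [he, tensXs_mulVec] at hx
  have hx' : ∀ y : Fin 15 → Bool, w false (fun i => xor (y i) true) = w true y :=
    fun y => congrFun hx y
  intro b y
  cases b
  · exact hx' y
  · have h2 := hx' (fun i => xor (y i) true)
    have harg : (fun i => xor (xor (y i) true) true) = y := by
      funext i; cases y i <;> rfl
    rw [harg] at h2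
    exact h2.symm

lemma steane_true_apply (x : Fin 7 → Bool) :
    steane true x = steane false (fun i => xor (x i) true) := by
  have he : (tensMat fun _ : Fin 7 => σx)
      = tensMat fun i : Fin 7 => if (fun _ : Fin 7 => true) i then σx else 1 := by
    simp
  show ((tensMat fun _ : Fin 7 => σx).mulVec
      (fun y => if y ∈ hammingC then ((Real.sqrt 8 : ℂ))⁻¹ else 0)) x = _
  rw [he, tensXs_mulVec]
  exact rfl

lemma steane_ne_zero {a : Bool} {x : Fin 7 → Bool} (h : steane a x ≠ 0) :
    (fun i => xor (x i) a) ∈ hammingC := by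
  cases a
  · have hx : steane false x = if x ∈ hammingC then ((Real.sqrt 8 : ℂ))⁻¹ else 0 := rfl
    rw [hx] at h
    have hm : x ∈ hammingC := by
      by_contra hc
      rw [if_neg hc] at h
      exact h rfl
    have hfe : (fun i => xor (x i) false) = x := by funext i; cases x i <;> rfl
    rwa [hfe]
  · rw [steane_true_apply] at h
    have hx : steane false (fun i => xor (x i) true)
        = if (fun i => xor (x i) true) ∈ hammingC then ((Real.sqrt 8 : ℂ))⁻¹ else 0 := rfl
    rw [hx] at h
    by_contra hc
    rw [if_neg hc] at h
    exact h rfl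

/-- combination of RM X-stabilizer supports -/
def comb (c : Fin 4 → Bool) (i : Fin 15) : Bool :=
  ((List.finRange 4).filter fun j => c j).foldr (fun j acc => xor (rmBit i j) acc) false

lemma shift_listaux (u : (Fin 15 → Bool) → ℂ)
    (hu : ∀ (j : Fin 4) (y : Fin 15 → Bool), u (fun i => xor (y i) (rmBit i j)) = u y)
    (cs : List (Fin 4)) :
    ∀ y : Fin 15 → Bool,
      u (fun i => xor (y i) (cs.foldr (fun j acc => xor (rmBit i j) acc) false)) = u y := by
  induction cs with
  | nil => intro y; simp
  | cons j cs ih =>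
      intro y
      have harg : (fun i => xor (y i) ((j :: cs).foldr (fun j acc => xor (rmBit i j) acc) false))
          = fun i => xor (xor (y i) (rmBit i j))
              (cs.foldr (fun j acc => xor (rmBit i j) acc) false) := by
        funext i
        simp only [List.foldr_cons]
        exact (Bool.xor_assoc _ _ _).symm
      rw [harg, ih (fun i => xor (y i) (rmBit i j)), hu j]

lemma shift_comb (u : (Fin 15 → Bool) → ℂ)
    (hu : ∀ (j : Fin 4) (y : Fin 15 → Bool), u (fun i => xor (y i) (rmBit i j)) = u y)
    (c : Fin 4 → Bool) (y : Fin 15 → Bool) :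
    u (fun i => xor (y i) (comb c i)) = u y :=
  shift_listaux u hu _ y

lemma key_comb : ∀ a4 p q r : Bool, ∃ c : Fin 4 → Bool,
    (fun j => fXor Lpairs (fun i => xor (xor (p && steaneGen 0 i)
        (xor (q && steaneGen 1 i) (r && steaneGen 2 i))) a4) j)
      = fun i => xor a4 (comb c i) := by
  decide

end stmt9Aux

set_option maxRecDepth 10000 in
/-- there is an ordered sequence of 17 CNOT gates from a Steane block to
a `[[15,1,3]]` Reed–Muller block whose product maps the tensor product of the two
codespaces onto itself and implements the logical CNOT (Steane control, RM target). -/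
theorem stmt9 :
    ∃ l : List (Fin 7 × Fin 15), l.length = 17 ∧
      ∀ w : Bool → ((Fin 15 → Bool) → ℂ), rmLogical w →
        (∀ a b : Bool,
          ((l.map fun p => CNOT2 p.1 p.2).prod).mulVec (tens2 (steane a) (w b))
            = tens2 (steane a) (w (xor a b))) ∧
        Submodule.map ((l.map fun p => CNOT2 p.1 p.2).prod).mulVecLin
            (Submodule.span ℂ {u | ∃ a b : Bool, u = tens2 (steane a) (w b)})
          = Submodule.span ℂ {u | ∃ a b : Bool, u = tens2 (steane a) (w b)} := by
  refine ⟨Lpairs, rfl, ?_⟩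
  intro w hw
  obtain ⟨hcs, -, -, -, hx⟩ := hw
  have hshift : ∀ (b : Bool) (j : Fin 4) (y : Fin 15 → Bool),
      w b (fun i => xor (y i) (rmBit i j)) = w b y :=
    fun b j y => rm_shift (w b) (hcs b) j y
  have hflip := rm_flip w hx
  have main : ∀ a b : Bool,
      ((Lpairs.map fun p => CNOT2 p.1 p.2).prod).mulVec (tens2 (steane a) (w b))
        = tens2 (steane a) (w (xor a b)) := by
    intro a b
    rw [prod_cnot2_mulVec]
    funext q
    show steane a q.1 * w b (fun j => xor (q.2 j) (fXor Lpairs q.1 j))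
        = steane a q.1 * w (xor a b) q.2
    by_cases h0 : steane a q.1 = 0
    · rw [h0, zero_mul, zero_mul]
    · obtain ⟨p, p', r, hc⟩ := steane_ne_zero h0
      have hq1 : q.1 = fun i => xor (xor (p && steaneGen 0 i)
          (xor (p' && steaneGen 1 i) (r && steaneGen 2 i))) a := by
        funext i
        have h : xor (q.1 i) a
            = xor (p && steaneGen 0 i) (xor (p' && steaneGen 1 i) (r && steaneGen 2 i)) :=
          congrFun hc i
        rw [← h]
        cases q.1 i <;> cases a <;> rfl
      obtain ⟨c, hcomb⟩ := key_comb a p p' r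
      have hF : ∀ j, fXor Lpairs q.1 j = xor a (comb c j) := by
        intro j
        have h2 : fXor Lpairs (fun i => xor (xor (p && steaneGen 0 i)
            (xor (p' && steaneGen 1 i) (r && steaneGen 2 i))) a) j = xor a (comb c j) :=
          congrFun hcomb j
        rw [hq1]
        exact h2
      congr 1
      cases a
      · have harg : (fun j => xor (q.2 j) (fXor Lpairs q.1 j))
            = fun j => xor (q.2 j) (comb c j) := by
          funext j; rw [hF j]; cases q.2 j <;> cases comb c j <;> rfl
        rw [harg, shift_comb (w b) (hshift b) c q.2, Bool.false_xor]
      · have harg : (fun j => xor (q.2 j) (fXor Lpairs q.1 j))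
            = fun j => xor ((fun k => xor (q.2 k) true) j) (comb c j) := by
          funext j; rw [hF j]
          show xor (q.2 j) (xor true (comb c j)) = xor (xor (q.2 j) true) (comb c j)
          cases q.2 j <;> cases comb c j <;> rfl
        rw [harg, shift_comb (w b) (hshift b) c (fun k => xor (q.2 k) true), hflip b q.2]
        cases b <;> rfl
  refine ⟨main, ?_⟩
  rw [Submodule.map_span]
  congr 1
  ext u
  simp only [Set.mem_image, Set.mem_setOf_eq, Matrix.mulVecLin_apply]
  constructor
  · rintro ⟨v, ⟨a, b, rfl⟩, rfl⟩
    exact ⟨a, xor a b, main a b⟩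
  · rintro ⟨a, b, rfl⟩
    refine ⟨tens2 (steane a) (w (xor a b)), ⟨a, xor a b, rfl⟩, ?_⟩
    rw [main a (xor a b)]
    have hb : xor a (xor a b) = b := by cases a <;> cases b <;> rfl
    rw [hb]


end
end

section
/- There exists a permutation σ of {1,2,3,4,5} with σ(3) = 3 such that the unitary P_σ · H^{⊗5}, where P_σ is the operator permuting the five tensor factors according to σ and H is the Hadamard gate, maps the codespace of the 5-qubit code onto itself and implements, up to a global phase, the logical Hadamard gate: P_σ·H^{⊗5}|0̄⟩ = ω(|0̄⟩+|1̄⟩)/√2 and P_σ·H^{⊗5}|1̄⟩ = ω(|0̄⟩−|1̄⟩)/√2 for some unimodular ω ∈ ℂ. -/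
/-!
Up to the factor `1/4`, the logical words of the 5-qubit code are the even-weight part and minus
the odd-weight part of the graph state `x ↦ (-1) ^ #{i | xᵢ = xᵢ₊₁ = 1}` of the 5-cycle. Each
stabilizer generator flips the bits of `x` along its X-part and multiplies by a sign; these X-parts
span the even-weight words, so a code vector vanishing at `00000` and `00001` vanishes, and the
code is spanned by the two words. Evaluating the Fourier sums shows that `P_σ H^{⊗5}`, for the
4-cycle `σ = (0 1 4 3)`, sends them to `-(|0̄⟩ ± |1̄⟩)/√2`; in particular it is an involution of
the code.
-/

open scoped Classical
open Matrix

noncomputable section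

/-- the operator permuting the five tensor factors according to `σ`
(factor `i` is sent to position `σ i`). -/
def permMat (σ : Equiv.Perm (Fin 5)) : Matrix (Fin 5 → Bool) (Fin 5 → Bool) ℂ :=
  Matrix.of fun y x => if y = x ∘ σ.symm then 1 else 0

open Finset

def pauliZX (b a : Bool) : Matrix Bool Bool ℂ := (if b then σz else 1) * (if a then σx else 1)

lemma pauliZX_apply (b a r c : Bool) :
    pauliZX b a r c = if c = xor a r then (if b && r then -1 else 1) else 0 := by
  cases b <;> cases a <;> cases r <;> cases c <;> simp [pauliZX, σz, σx, Matrix.mul_apply]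

lemma tensMat_pauliZX_mulVec_apply {ι : Type*} [Fintype ι] [DecidableEq ι] (b a : ι → Bool)
    (v : (ι → Bool) → ℂ) (y : ι → Bool) :
    (tensMat (fun i => pauliZX (b i) (a i)) *ᵥ v) y
      = (∏ i, if b i && y i then -1 else 1) * v (fun i => xor (a i) (y i)) := by
  rw [mulVec, dotProduct, sum_eq_single (fun i => xor (a i) (y i))]
  · simp [tensMat, pauliZX_apply]
  · intro x _ hx
    obtain ⟨i, hi⟩ := Function.ne_iff.mp hx
    simp only [tensMat, of_apply]
    rw [prod_eq_zero (mem_univ i) (by rw [pauliZX_apply, if_neg hi]), zero_mul]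
  · simp

lemma tensMat_hadamard_mulVec_apply {ι : Type*} [Fintype ι] [DecidableEq ι]
    (v : (ι → Bool) → ℂ) (y : ι → Bool) :
    (tensMat (fun _ : ι => Hgate) *ᵥ v) y
      = (Real.sqrt 2 : ℂ)⁻¹ ^ Fintype.card ι * ∑ x, (∏ i, if y i && x i then -1 else 1) * v x := by
  simp only [mulVec, dotProduct, tensMat, Hgate, of_apply, div_eq_mul_inv, prod_mul_distrib,
    prod_const, card_univ, mul_sum]
  exact sum_congr rfl fun x _ => by ring

lemma permMat_mulVec_apply (σ : Equiv.Perm (Fin 5)) (v : (Fin 5 → Bool) → ℂ)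
    (y : Fin 5 → Bool) : (permMat σ *ᵥ v) y = v (y ∘ σ) := by
  have key : ∀ x : Fin 5 → Bool, y = x ∘ σ.symm ↔ x = y ∘ σ := fun x => by
    constructor <;> rintro rfl <;> ext i <;> simp
  simp [permMat, mulVec, dotProduct, key]

lemma ofReal_sqrt_two_sq : (Real.sqrt 2 : ℂ) ^ 2 = 2 := by
  rw [← Complex.ofReal_pow, Real.sq_sqrt zero_le_two, Complex.ofReal_ofNat]

lemma ofReal_sqrt_two_ne_zero : (Real.sqrt 2 : ℂ) ≠ 0 := by
  exact_mod_cast Real.sqrt_ne_zero'.mpr two_pos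

lemma Submodule.map_eq_self_of_involutive {R M : Type*} [Semiring R] [AddCommMonoid M]
    [Module R M] {f : M →ₗ[R] M} {p : Submodule R M} (hmaps : ∀ v ∈ p, f v ∈ p)
    (hinv : ∀ v ∈ p, f (f v) = v) : p.map f = p :=
  le_antisymm (Submodule.map_le_iff_le_comap.mpr hmaps) fun v hv => ⟨f v, hmaps v hv, hinv v hv⟩

-- `fiveStab k` is the `k`-th cyclic shift of `XZZXI`.
def fiveStabX (k : Fin 4) (i : Fin 5) : Bool := i - k.castSucc = 0 || i - k.castSucc = 3

def fiveStabZ (k : Fin 4) (i : Fin 5) : Bool := i - k.castSucc = 1 || i - k.castSucc = 2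

lemma fiveStab_eq (k : Fin 4) :
    fiveStab k = tensMat fun i => pauliZX (fiveStabZ k i) (fiveStabX k i) := by
  fin_cases k <;> refine congrArg tensMat (funext fun i => ?_) <;> fin_cases i <;>
    simp +decide [pauliZX]

lemma mem_fiveCodespace_iff {v : (Fin 5 → Bool) → ℂ} : v ∈ fiveCodespace ↔
    ∀ k, (tensMat fun i => pauliZX (fiveStabZ k i) (fiveStabX k i)) *ᵥ v = v := by
  simp only [← fiveStab_eq]
  constructor
  · intro hv k
    convert hv (fiveStab k) ⟨k, rfl⟩
  · rintro hv _ ⟨k, rfl⟩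
    convert hv k

def fiveWord (b : Bool) (x : Fin 5 → Bool) : ℤ :=
  if (∑ i, (x i).toNat) % 2 = b.toNat then (-1) ^ (∑ i, (x i && x (i + 1)).toNat + b.toNat)
  else 0

def fiveBasis (b : Bool) : (Fin 5 → Bool) → ℂ := fun x => fiveWord b x

lemma fiveWord_stab : ∀ k b y, (∏ i, if fiveStabZ k i && y i then -1 else 1)
    * fiveWord b (fun i => xor (fiveStabX k i) (y i)) = fiveWord b y := by
  decide

lemma fiveWord_flip : ∀ y, fiveWord false (fun i => xor true (y i)) = fiveWord true y := by
  decide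

lemma fiveWord_reach : ∀ y, ∃ L ∈ (List.finRange 4).sublists,
    L.foldr (fun k z i => xor (fiveStabX k i) (z i)) y ∈ [fun _ => false, fun i => i == 4] := by
  decide

lemma fiveBasis_mem (b : Bool) : fiveBasis b ∈ fiveCodespace := by
  refine mem_fiveCodespace_iff.mpr fun k => funext fun y => ?_
  rw [tensMat_pauliZX_mulVec_apply]
  simp only [fiveBasis]
  exact_mod_cast fiveWord_stab k b y

lemma tensMat_σx_mulVec_fiveBasis :
    (tensMat fun _ : Fin 5 => σx) *ᵥ fiveBasis false = fiveBasis true := by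
  have hX : (tensMat fun _ : Fin 5 => σx) = tensMat fun _ => pauliZX false true := by
    simp [pauliZX]
  funext y
  rw [hX, tensMat_pauliZX_mulVec_apply]
  simp only [Bool.false_and, Bool.false_eq_true, if_false, prod_const_one, one_mul, fiveBasis]
  exact_mod_cast fiveWord_flip y

lemma List.foldr_iff_of_forall_iff {α κ : Type*} (P : α → Prop) (g : κ → α → α)
    (hg : ∀ k z, P (g k z) ↔ P z) (L : List κ) (y : α) : P (L.foldr g y) ↔ P y := by
  induction L with
  | nil => rfl
  | cons k L ih => rw [List.foldr_cons, hg, ih]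

lemma eq_zero_of_mem_fiveCodespace {v : (Fin 5 → Bool) → ℂ} (hv : v ∈ fiveCodespace)
    (h₀ : v (fun _ => false) = 0) (h₁ : v (fun i => i == 4) = 0) : v = 0 := by
  have hflip : ∀ k z, v (fun i => xor (fiveStabX k i) (z i)) = 0 ↔ v z = 0 := fun k z => by
    have h := congrFun (mem_fiveCodespace_iff.mp hv k) z
    rw [tensMat_pauliZX_mulVec_apply] at h
    rw [← h, mul_eq_zero_iff_left (prod_ne_zero_iff.mpr fun i _ => by split_ifs <;> norm_num)]
  funext y
  obtain ⟨L, -, hL⟩ := fiveWord_reach y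
  rw [Pi.zero_apply, ← List.foldr_iff_of_forall_iff (v · = 0) _ hflip L y]
  rcases List.mem_pair.mp hL with h | h <;> rw [h] <;> assumption

lemma eq_sub_of_mem_fiveCodespace {v : (Fin 5 → Bool) → ℂ} (hv : v ∈ fiveCodespace) :
    v = v (fun _ => false) • fiveBasis false - v (fun i => i == 4) • fiveBasis true := by
  rw [← sub_eq_zero]
  apply eq_zero_of_mem_fiveCodespace
  · exact sub_mem hv (sub_mem (Submodule.smul_mem _ _ (fiveBasis_mem _))
      (Submodule.smul_mem _ _ (fiveBasis_mem _)))
  · simp [fiveBasis, fiveWord]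
  · simp [fiveBasis, fiveWord, Fin.sum_univ_five]

lemma exists_smul_fiveBasis_of_fiveLogical {v : Bool → (Fin 5 → Bool) → ℂ} (hv : fiveLogical v) :
    ∃ α : ℂ, v false = α • fiveBasis false ∧ v true = α • fiveBasis true := by
  obtain ⟨hmem, -, hZ, -, hX⟩ := hv
  have hodd : v false (fun i => i == 4) = 0 := by
    have hZ' : (tensMat fun _ : Fin 5 => σz) = tensMat fun _ => pauliZX true false := by
      simp [pauliZX]
    have h := congrFun hZ (fun i => i == 4)
    rw [hZ', tensMat_pauliZX_mulVec_apply] at h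
    have hsign : (∏ i : Fin 5, if true && i == 4 then (-1 : ℂ) else 1) = -1 := by simp
    simp only [hsign, Bool.false_xor] at h
    linear_combination -h / 2
  set α := v false (fun _ => false)
  have h₀ : v false = α • fiveBasis false := by
    simpa [hodd] using eq_sub_of_mem_fiveCodespace (hmem false)
  refine ⟨α, h₀, ?_⟩
  rw [← hX, h₀, mulVec_smul, tensMat_σx_mulVec_fiveBasis]

def hadamardPerm : Equiv.Perm (Fin 5) := c[0, 1, 4, 3]

local notation "U" => permMat hadamardPerm * tensMat fun _ : Fin 5 => Hgate

lemma fiveWord_hadamard : ∀ b y, ∑ x : Fin 5 → Bool,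
    (∏ i, if (y ∘ hadamardPerm) i && x i then -1 else 1) * fiveWord b x
      = -4 * (fiveWord false y + (if b then -1 else 1) * fiveWord true y) := by
  decide

lemma mulVec_fiveBasis (b : Bool) :
    U *ᵥ fiveBasis b =
      (-(Real.sqrt 2 : ℂ)⁻¹) • (fiveBasis false + (if b then -1 else 1 : ℂ) • fiveBasis true) := by
  funext y
  rw [← mulVec_mulVec, permMat_mulVec_apply, tensMat_hadamard_mulVec_apply, Fintype.card_fin]
  have h : ∑ x, (∏ i, if (y ∘ hadamardPerm) i && x i then -1 else 1) * fiveBasis b x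
      = -4 * (fiveBasis false y + (if b then -1 else 1) * fiveBasis true y) := by
    simp only [fiveBasis]
    exact_mod_cast fiveWord_hadamard b y
  have hc : (Real.sqrt 2 : ℂ)⁻¹ ^ 5 * -4 = -(Real.sqrt 2 : ℂ)⁻¹ := by
    field_simp [ofReal_sqrt_two_ne_zero]
    linear_combination ((Real.sqrt 2 : ℂ) ^ 2 + 2) * ofReal_sqrt_two_sq
  rw [h, ← mul_assoc, hc]
  simp only [Pi.smul_apply, Pi.add_apply, smul_eq_mul]

lemma mulVec_mulVec_fiveBasis (b : Bool) : U *ᵥ (U *ᵥ fiveBasis b) = fiveBasis b := by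
  rw [mulVec_fiveBasis b, mulVec_smul, mulVec_add, mulVec_smul, mulVec_fiveBasis, mulVec_fiveBasis]
  funext y
  cases b <;>
    simp only [Pi.smul_apply, Pi.add_apply, smul_eq_mul, Bool.false_eq_true, ↓reduceIte] <;>
    field_simp [ofReal_sqrt_two_ne_zero]
  · linear_combination -fiveBasis false y * ofReal_sqrt_two_sq
  · linear_combination -fiveBasis true y * ofReal_sqrt_two_sq

lemma map_fiveCodespace : fiveCodespace.map (U).mulVecLin = fiveCodespace := by
  have hmem (b : Bool) : U *ᵥ fiveBasis b ∈ fiveCodespace := by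
    rw [mulVec_fiveBasis]
    exact Submodule.smul_mem _ _
      (add_mem (fiveBasis_mem _) (Submodule.smul_mem _ _ (fiveBasis_mem _)))
  have hspan : ∀ v ∈ fiveCodespace, ∃ α β : ℂ, v = α • fiveBasis false - β • fiveBasis true :=
    fun v hv => ⟨_, _, eq_sub_of_mem_fiveCodespace hv⟩
  refine Submodule.map_eq_self_of_involutive (fun v hv => ?_) fun v hv => ?_
  · obtain ⟨α, β, rfl⟩ := hspan v hv
    simp only [mulVecLin_apply, mulVec_sub, mulVec_smul]
    exact sub_mem (Submodule.smul_mem _ _ (hmem _)) (Submodule.smul_mem _ _ (hmem _))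
  · obtain ⟨α, β, rfl⟩ := hspan v hv
    simp only [mulVecLin_apply, mulVec_sub, mulVec_smul, mulVec_mulVec_fiveBasis]

/-- there is a permutation `σ` of the five qubits fixing qubit 3 such
that `P_σ · H^{⊗5}` maps the 5-qubit codespace onto itself and implements, up to a
global phase, the logical Hadamard gate. -/
theorem stmt10 :
    ∃ σ : Equiv.Perm (Fin 5), σ 2 = 2 ∧
      Submodule.map (permMat σ * tensMat fun _ : Fin 5 => Hgate).mulVecLin fiveCodespace
        = fiveCodespace ∧
      ∀ v : Bool → ((Fin 5 → Bool) → ℂ), fiveLogical v →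
        ∃ ω : ℂ, ‖ω‖ = 1 ∧
          (permMat σ * tensMat fun _ : Fin 5 => Hgate).mulVec (v false)
            = (ω / (Real.sqrt 2 : ℂ)) • (v false + v true) ∧
          (permMat σ * tensMat fun _ : Fin 5 => Hgate).mulVec (v true)
            = (ω / (Real.sqrt 2 : ℂ)) • (v false - v true) := by
  refine ⟨hadamardPerm, by decide, map_fiveCodespace, fun v hv => ⟨-1, by simp, ?_⟩⟩
  obtain ⟨α, h₀, h₁⟩ := exists_smul_fiveBasis_of_fiveLogical hv
  simp only [h₀, h₁, mulVec_smul, mulVec_fiveBasis, Bool.false_eq_true, ↓reduceIte]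
  constructor <;> module

end
end

section
/- The CNOT gate is transversal on the Steane code: the product ∏_{i=1}^{7} CNOT_{i→i} of seven physical CNOT gates, each with control qubit i of a first Steane block and target qubit i of a second Steane block, maps the tensor product of the two codespaces onto itself and implements the logical CNOT gate exactly: it maps |ā⟩ ⊗ |b̄⟩ to |ā⟩ ⊗ |(a⊕b)‾⟩ for all a, b ∈ {0,1}. -/
open scoped Classical
open Matrix

noncomputable section

-- Auxiliary lemmas for stmt15

/-- `Function.update` with the classical decidability instance, as it appears in `CNOT2`. -/
def cupd (x : Fin 7 → Bool) (j : Fin 7) (v : Bool) : Fin 7 → Bool :=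
  @Function.update (Fin 7) (fun _ => Bool) (fun a b => Classical.propDecidable (a = b)) x j v

lemma cupd_eq (x : Fin 7 → Bool) (j : Fin 7) (v : Bool) :
    cupd x j v = Function.update x j v := by
  funext k
  by_cases hk : k = j
  · subst hk
    simp only [cupd, Function.update_self]
  · simp only [cupd, Function.update_of_ne hk]
    exact @Function.update_of_ne (Fin 7) (fun _ => Bool)
      (fun a b => Classical.propDecidable (a = b)) k j hk v x

set_option maxRecDepth 10000 in
lemma cnot2_mulVec_s15 (i j : Fin 7) (f : ((Fin 7 → Bool) × (Fin 7 → Bool)) → ℂ)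
    (p : (Fin 7 → Bool) × (Fin 7 → Bool)) :
    (CNOT2 (ι := Fin 7) (κ := Fin 7) i j).mulVec f p
      = f (p.1, Function.update p.2 j (xor (p.1 i) (p.2 j))) := by
  have key : ∀ x : (Fin 7 → Bool) × (Fin 7 → Bool),
      (p = (x.1, cupd x.2 j (xor (x.1 i) (x.2 j)))) ↔
      (x = (p.1, Function.update p.2 j (xor (p.1 i) (p.2 j)))) := by
    intro x
    constructor
    · rintro rfl
      ext k
      · rfl
      · by_cases hk : k = j
        · subst hk
          simp [cupd_eq, Function.update_self]
        · simp [cupd_eq, Function.update_of_ne hk]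
    · rintro rfl
      ext k
      · rfl
      · by_cases hk : k = j
        · subst hk
          simp [cupd_eq, Function.update_self]
        · simp [cupd_eq, Function.update_of_ne hk]
  unfold CNOT2 Matrix.mulVec dotProduct
  simp only [Matrix.of_apply, ite_mul, one_mul, zero_mul]
  rw [Finset.sum_eq_single (p.1, Function.update p.2 j (xor (p.1 i) (p.2 j)))]
  · exact if_pos ((key _).mpr rfl)
  · intro x _ hx
    exact if_neg (fun h => hx ((key x).mp h))
  · intro h
    exact absurd (Finset.mem_univ _) h

lemma prod_cnot_mulVec_s15 (L : List (Fin 7)) (hL : L.Nodup)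
    (f : ((Fin 7 → Bool) × (Fin 7 → Bool)) → ℂ) (p : (Fin 7 → Bool) × (Fin 7 → Bool)) :
    ((L.map fun i => CNOT2 (ι := Fin 7) (κ := Fin 7) i i).prod).mulVec f p
      = f (p.1, fun j => if j ∈ L then xor (p.1 j) (p.2 j) else p.2 j) := by
  induction L generalizing p with
  | nil =>
      rw [List.map_nil, List.prod_nil, Matrix.one_mulVec]
      simp
  | cons i L ih =>
      obtain ⟨hi, hL'⟩ := List.nodup_cons.mp hL
      rw [List.map_cons, List.prod_cons, ← Matrix.mulVec_mulVec]
      rw [cnot2_mulVec_s15, ih hL']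
      congr 1
      refine Prod.ext rfl ?_
      funext j
      by_cases hj : j = i
      · subst hj
        simp [Function.update_self, hi]
      · simp [Function.update_of_ne hj, hj, List.mem_cons]

lemma tensX_mulVec (f : (Fin 7 → Bool) → ℂ) (x : Fin 7 → Bool) :
    (tensMat fun _ : Fin 7 => σx).mulVec f x = f (fun i => ! x i) := by
  have key : ∀ y : Fin 7 → Bool,
      (∏ i, σx (x i) (y i)) = if y = (fun i => ! x i) then (1 : ℂ) else 0 := by
    intro y
    by_cases h : y = fun i => ! x i
    · subst h
      simp [σx]
    · rw [if_neg h]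
      have : ∃ i, y i ≠ ! x i := by
        by_contra hc
        push_neg at hc
        exact h (funext hc)
      obtain ⟨i, hi⟩ := this
      refine Finset.prod_eq_zero (Finset.mem_univ i) ?_
      simp only [σx, Matrix.of_apply]
      rw [if_neg]
      intro hx
      exact hi (by cases hx2 : x i <;> cases hy2 : y i <;> simp_all)
  unfold tensMat Matrix.mulVec dotProduct
  simp only [Matrix.of_apply]
  rw [Finset.sum_congr rfl (fun y _ => by rw [key y])]
  simp [Finset.sum_ite_eq']

lemma steane_apply (b : Bool) (y : Fin 7 → Bool) :
    steane b y = if (fun i => xor b (y i)) ∈ hammingC then ((Real.sqrt 8 : ℂ))⁻¹ else 0 := by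
  cases b with
  | false =>
      simp only [steane, if_neg Bool.false_ne_true, Bool.false_xor]
  | true =>
      have hs : steane true = (tensMat fun _ : Fin 7 => σx).mulVec
          (fun y => if y ∈ hammingC then ((Real.sqrt 8 : ℂ))⁻¹ else 0) := by
        simp [steane]
      rw [hs, tensX_mulVec]
      simp [Bool.true_xor]

lemma bool_lin (a1 b1 e1 a2 b2 e2 g h k : Bool) :
    xor (xor (a1 && g) (xor (b1 && h) (e1 && k))) (xor (a2 && g) (xor (b2 && h) (e2 && k)))
      = xor ((xor a1 a2) && g) (xor ((xor b1 b2) && h) ((xor e1 e2) && k)) := by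
  cases a1 <;> cases b1 <;> cases e1 <;> cases a2 <;> cases b2 <;> cases e2 <;>
    cases g <;> cases h <;> cases k <;> rfl

lemma hammingC_xor {c d : Fin 7 → Bool} (hc : c ∈ hammingC) (hd : d ∈ hammingC) :
    (fun i => xor (c i) (d i)) ∈ hammingC := by
  obtain ⟨a1, b1, e1, h1⟩ := hc
  obtain ⟨a2, b2, e2, h2⟩ := hd
  refine ⟨xor a1 a2, xor b1 b2, xor e1 e2, ?_⟩
  funext i
  rw [h1, h2]
  exact bool_lin a1 b1 e1 a2 b2 e2 (steaneGen 0 i) (steaneGen 1 i) (steaneGen 2 i)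

lemma hammingC_cancel {c : Fin 7 → Bool} (hc : c ∈ hammingC) (d : Fin 7 → Bool) :
    ((fun i => xor (c i) (d i)) ∈ hammingC) ↔ d ∈ hammingC := by
  constructor
  · intro h
    have := hammingC_xor hc h
    have heq : (fun i => xor (c i) (xor (c i) (d i))) = d := by
      funext i
      cases hci : c i <;> cases hdi : d i <;> rfl
    rwa [heq] at this
  · exact fun h => hammingC_xor hc h

lemma steane_mul (a b : Bool) (x y : Fin 7 → Bool) :
    steane a x * steane b (fun i => xor (x i) (y i)) = steane a x * steane (xor a b) y := by
  rw [steane_apply, steane_apply, steane_apply]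
  by_cases hx : (fun i => xor a (x i)) ∈ hammingC
  · rw [if_pos hx]
    congr 1
    have heq : (fun i => xor b (xor (x i) (y i)))
        = fun i => xor (xor a (x i)) (xor (xor a b) (y i)) := by
      funext i
      cases a <;> cases b <;> cases hxi : x i <;> cases hyi : y i <;> rfl
    rw [heq]
    exact if_congr (hammingC_cancel hx _) rfl rfl
  · rw [if_neg hx, zero_mul, zero_mul]

lemma stmt15_main (a b : Bool) :
    (((List.finRange 7).map fun i => CNOT2 i i).prod).mulVec
        (tens2 (steane a) (steane b))
      = tens2 (steane a) (steane (xor a b)) := by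
  funext p
  rw [prod_cnot_mulVec_s15 _ (List.nodup_finRange 7)]
  simp only [List.mem_finRange, if_true]
  exact steane_mul a b p.1 p.2

/-- CNOT is transversal on the Steane code: `∏_{i=1}^{7} CNOT_{i→i}`
between two Steane blocks maps the tensor product of the two codespaces onto itself
and implements the logical CNOT exactly. -/
theorem stmt15 :
    (∀ a b : Bool,
      (((List.finRange 7).map fun i => CNOT2 i i).prod).mulVec
          (tens2 (steane a) (steane b))
        = tens2 (steane a) (steane (xor a b))) ∧
    Submodule.map (((List.finRange 7).map fun i => CNOT2 i i).prod).mulVecLin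
        (Submodule.span ℂ {u | ∃ a b : Bool, u = tens2 (steane a) (steane b)})
      = Submodule.span ℂ {u | ∃ a b : Bool, u = tens2 (steane a) (steane b)} := by
  refine ⟨stmt15_main, ?_⟩
  rw [Submodule.map_span]
  congr 1
  ext u
  constructor
  · rintro ⟨v, ⟨a, b, rfl⟩, rfl⟩
    exact ⟨a, xor a b, by rw [Matrix.mulVecLin_apply, stmt15_main]⟩
  · rintro ⟨a, b, rfl⟩
    refine ⟨tens2 (steane a) (steane (xor a b)), ⟨a, xor a b, rfl⟩, ?_⟩
    rw [Matrix.mulVecLin_apply, stmt15_main]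
    cases a <;> cases b <;> rfl

end
end
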